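/- Let n ≥ 1 and let π be a permutation of {1, …, n}. Then π is a polynomial interchange if and only if π is separable. Here π is a polynomial interchange if there exist polynomials P₁, …, Pₙ ∈ ℝ[x] and ε > 0 such that for all x ∈ (−ε, 0) one has P₁(x) < P₂(x) < ⋯ < Pₙ(x), and for all x ∈ (0, ε) one has P_{π(1)}(x) < P_{π(2)}(x) < ⋯ < P_{π(n)}(x). -/

import Mathlib

/-!
Index the polynomials by position, `Q i = P (π i)`. For `i < j` the difference `Q j - Q i` is
positive just right of `0`, and it changes sign at `0` exactly when its order of vanishing
`v i j` there is odd, i.e. exactly when `π` inverts `i` and `j`. Orders of vanishing are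
ultrametric, `min (v i j) (v j k) ≤ v i k`, so in each triangle the minimum is attained twice;
the parities that a pattern `2413` or `3142` prescribes on its six pairs violate this.

Conversely, a separable permutation of at least two positions is a direct sum or a skew sum of
two smaller separable ones (insert the last position into such a decomposition of the others).
If `A` and `B` realise the two blocks, then `X ^ 2 * A` together with `X ^ 2 * B + 1`
(direct sum) or `X ^ 2 * B + X` (skew sum) realise the whole, because `x ^ 2 * p x = o(x)`.
-/

open Filter Topology Polynomial Finset OrderDual Function

namespace Polynomial

theorem rootMultiplicity_sub_comm {R : Type*} [CommRing R] (a : R) (f g : R[X]) :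
    (f - g).rootMultiplicity a = (g - f).rootMultiplicity a := by
  classical
  rw [← neg_sub g f, rootMultiplicity_eq_multiplicity, rootMultiplicity_eq_multiplicity,
    multiplicity_neg]
  simp only [neg_eq_zero]

theorem min_rootMultiplicity_sub_le {R : Type*} [CommRing R] (a : R) {f g h : R[X]}
    (hfh : h - f ≠ 0) :
    min ((g - f).rootMultiplicity a) ((h - g).rootMultiplicity a) ≤
      (h - f).rootMultiplicity a := by
  rw [min_comm, ← sub_add_sub_cancel h g f] at *
  exact rootMultiplicity_add a hfh

theorem eventually_pos_neg_one_pow_rootMultiplicity_mul_eval {h : ℝ[X]} (hh : h ≠ 0) :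
    ∀ᶠ x in 𝓝[>] 0, 0 < (-1) ^ h.rootMultiplicity 0 * (h.eval (-x) * h.eval x) := by
  set m := h.rootMultiplicity 0
  set g := h /ₘ (X - C 0) ^ m
  have hfac (y : ℝ) : h.eval y = y ^ m * g.eval y := by
    conv_lhs => rw [← pow_mul_divByMonic_rootMultiplicity_eq h 0]
    simp [g, m]
  have hg₀ : g.eval 0 ≠ 0 := eval_divByMonic_pow_rootMultiplicity_ne_zero 0 hh
  have hsign : ∀ᶠ y in 𝓝 0, 0 < g.eval 0 * g.eval y :=
    ((g.continuous.tendsto 0).const_mul _).eventually_const_lt (mul_self_pos.2 hg₀)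
  have hsign' : ∀ᶠ y in 𝓝 0, 0 < g.eval 0 * g.eval (-y) :=
    (continuous_neg.tendsto' 0 0 neg_zero).eventually hsign
  filter_upwards [self_mem_nhdsWithin, nhdsWithin_le_nhds (hsign.and hsign')]
    with x (hx : 0 < x) ⟨h₁, h₂⟩
  have hg : 0 < g.eval (-x) * g.eval x :=
    pos_of_mul_pos_right (a := g.eval 0 ^ 2) (by nlinarith) (sq_nonneg _)
  calc 0 < (x ^ m) ^ 2 * (g.eval (-x) * g.eval x) := by positivity
    _ = _ := by
      rw [hfac, hfac, show (x ^ m) ^ 2 = ((-1) ^ m * (-x) ^ m) * x ^ m by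
        rw [← mul_pow, neg_one_mul, neg_neg, sq]]
      ring

theorem exists_neg_one_pow_rootMultiplicity_sub_mul_pos {f g : ℝ[X]} {p : ℝ → Prop}
    (hl : ∀ᶠ x in 𝓝[<] 0, p x) (hr : ∀ᶠ x in 𝓝[>] 0, f.eval x < g.eval x) :
    ∃ x, 0 < (-1) ^ (g - f).rootMultiplicity 0 *
      ((g.eval (-x) - f.eval (-x)) * (g.eval x - f.eval x)) ∧ p (-x) ∧ f.eval x < g.eval x := by
  have hne : g - f ≠ 0 := fun h => by
    obtain ⟨x, hx⟩ := hr.exists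
    rw [sub_eq_zero.1 h] at hx
    exact lt_irrefl _ hx
  have hneg : Tendsto Neg.neg (𝓝[>] (0 : ℝ)) (𝓝[<] 0) := by
    simpa using tendsto_neg_nhdsGT_neg (a := (0 : ℝ))
  simpa only [eval_sub] using
    ((eventually_pos_neg_one_pow_rootMultiplicity_mul_eval hne).and
      ((hneg.eventually hl).and hr)).exists

theorem even_rootMultiplicity_sub_of_eventually_lt {f g : ℝ[X]}
    (hl : ∀ᶠ x in 𝓝[<] 0, f.eval x < g.eval x)
    (hr : ∀ᶠ x in 𝓝[>] 0, f.eval x < g.eval x) :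
    Even ((g - f).rootMultiplicity 0) := by
  obtain ⟨x, hx, hxl, hxr⟩ := exists_neg_one_pow_rootMultiplicity_sub_mul_pos hl hr
  refine (Nat.even_or_odd _).resolve_right fun ho => ?_
  rw [ho.neg_one_pow] at hx
  nlinarith

theorem odd_rootMultiplicity_sub_of_eventually_lt {f g : ℝ[X]}
    (hl : ∀ᶠ x in 𝓝[<] 0, g.eval x < f.eval x)
    (hr : ∀ᶠ x in 𝓝[>] 0, f.eval x < g.eval x) :
    Odd ((g - f).rootMultiplicity 0) := by
  obtain ⟨x, hx, hxl, hxr⟩ := exists_neg_one_pow_rootMultiplicity_sub_mul_pos hl hr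
  refine (Nat.even_or_odd _).resolve_left fun he => ?_
  rw [he.neg_one_pow] at hx
  nlinarith

theorem eventually_sq_mul_eval_lt_abs (p : ℝ[X]) :
    ∀ᶠ x in 𝓝[≠] 0, x ^ 2 * p.eval x < |x| := by
  have hlim : Tendsto (fun x => x * p.eval x) (𝓝 0) (𝓝 0) := by
    simpa using tendsto_id.mul (p.continuous.tendsto 0)
  filter_upwards [self_mem_nhdsWithin,
    nhdsWithin_le_nhds (hlim.eventually (Ioo_mem_nhds neg_one_lt_zero one_pos))]
    with x (hx : x ≠ 0) ⟨h₁, h₂⟩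
  calc x ^ 2 * p.eval x = x * (x * p.eval x) := by ring
    _ ≤ |x| * |x * p.eval x| := (le_abs_self _).trans (abs_mul _ _).le
    _ < |x| * 1 := mul_lt_mul_of_pos_left (abs_lt.2 ⟨h₁, h₂⟩) (abs_pos.2 hx)
    _ = |x| := mul_one _

end Polynomial

section Separable

variable {ι κ : Type*}

def IsSeparablePerm [LT ι] [LT κ] (π : ι → κ) : Prop :=
  ¬ ∃ i₁ i₂ i₃ i₄ : ι, i₁ < i₂ ∧ i₂ < i₃ ∧ i₃ < i₄ ∧
      ((π i₂ < π i₄ ∧ π i₄ < π i₁ ∧ π i₁ < π i₃) ∨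
       (π i₃ < π i₁ ∧ π i₁ < π i₄ ∧ π i₄ < π i₂))

theorem IsSeparablePerm.toDual [LT ι] [LT κ] {π : ι → κ} (hπ : IsSeparablePerm π) :
    IsSeparablePerm (toDual ∘ π) := by
  rintro ⟨i₁, i₂, i₃, i₄, h₁₂, h₂₃, h₃₄, ⟨a, b, c⟩ | ⟨a, b, c⟩⟩
  exacts [hπ ⟨i₁, i₂, i₃, i₄, h₁₂, h₂₃, h₃₄, .inr ⟨c, b, a⟩⟩,
    hπ ⟨i₁, i₂, i₃, i₄, h₁₂, h₂₃, h₃₄, .inl ⟨c, b, a⟩⟩]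

theorem isSeparablePerm_of_eventually_lt [Preorder ι] [Preorder κ] {π : ι → κ}
    (Q : ι → ℝ[X]) (hl : ∀ i j, π i < π j → ∀ᶠ x in 𝓝[<] 0, (Q i).eval x < (Q j).eval x)
    (hr : ∀ i j, i < j → ∀ᶠ x in 𝓝[>] 0, (Q i).eval x < (Q j).eval x) :
    IsSeparablePerm π := by
  rintro ⟨i₁, i₂, i₃, i₄, h₁₂, h₂₃, h₃₄, hpat⟩
  let v i j := (Q j - Q i).rootMultiplicity 0
  have even {i j} (hij : i < j) (h : π i < π j) : v i j % 2 = 0 :=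
    Nat.even_iff.1 (even_rootMultiplicity_sub_of_eventually_lt (hl i j h) (hr i j hij))
  have odd {i j} (hij : i < j) (h : π j < π i) : v i j % 2 = 1 :=
    Nat.odd_iff.1 (odd_rootMultiplicity_sub_of_eventually_lt (hl j i h) (hr i j hij))
  have hne {i j} (hij : i < j) : Q j - Q i ≠ 0 := fun h => by
    obtain ⟨x, hx⟩ := (hr i j hij).exists
    rw [sub_eq_zero.1 h] at hx
    exact lt_irrefl _ hx
  have tri {i j k} (hij : i < j) (hjk : j < k) : min (v i j) (v j k) ≤ v i k ∧
      min (v i j) (v i k) ≤ v j k ∧ min (v i k) (v j k) ≤ v i j := by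
    refine ⟨min_rootMultiplicity_sub_le 0 (hne (hij.trans hjk)), ?_, ?_⟩
    · simpa only [rootMultiplicity_sub_comm 0 (Q i) (Q j)] using
        min_rootMultiplicity_sub_le 0 (f := Q j) (g := Q i) (h := Q k) (hne hjk)
    · simpa only [rootMultiplicity_sub_comm 0 (Q j) (Q k)] using
        min_rootMultiplicity_sub_le 0 (f := Q i) (g := Q k) (h := Q j) (hne hij)
  have := tri h₁₂ h₂₃
  have := tri h₁₂ (h₂₃.trans h₃₄)
  have := tri (h₁₂.trans h₂₃) h₃₄
  have := tri h₂₃ h₃₄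
  rcases hpat with ⟨h₂₄, h₄₁, h₁₃⟩ | ⟨h₃₁, h₁₄, h₄₂⟩
  · have := odd h₁₂ (h₂₄.trans h₄₁)
    have := even (h₁₂.trans h₂₃) h₁₃
    have := odd (h₁₂.trans (h₂₃.trans h₃₄)) h₄₁
    have := even h₂₃ (h₂₄.trans (h₄₁.trans h₁₃))
    have := even (h₂₃.trans h₃₄) h₂₄
    have := odd h₃₄ (h₄₁.trans h₁₃)
    omega
  · have := even h₁₂ (h₁₄.trans h₄₂)
    have := odd (h₁₂.trans h₂₃) h₃₁
    have := even (h₁₂.trans (h₂₃.trans h₃₄)) h₁₄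
    have := odd h₂₃ (h₃₁.trans (h₁₄.trans h₄₂))
    have := odd (h₂₃.trans h₃₄) h₄₂
    have := even h₃₄ (h₃₁.trans h₁₄)
    omega

variable [LinearOrder ι] [LinearOrder κ] {π : ι → κ} {s : Finset ι} {t a : ι}

/-- `t` cuts `s` into two nonempty blocks, the positions before `t` carrying smaller values than
the positions from `t` on. The skew cuts of `π` are the cuts of `toDual ∘ π`. -/
def IsSumCut (π : ι → κ) (s : Finset ι) (t : ι) : Prop :=
  (∃ i ∈ s, i < t) ∧ t ∈ s ∧ ∀ i ∈ s, ∀ j ∈ s, i < t → t ≤ j → π i < π j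

def IsDecomposableOn (π : ι → κ) (s : Finset ι) : Prop :=
  ∃ t, IsSumCut π s t ∨ IsSumCut (toDual ∘ π) s t

theorem IsDecomposableOn.of_toDual (h : IsDecomposableOn (toDual ∘ π) s) :
    IsDecomposableOn π s :=
  let ⟨t, ht⟩ := h
  ⟨t, ht.symm⟩

theorem IsSumCut.filter_lt_ssubset (h : IsSumCut π s t) : s.filter (· < t) ⊂ s :=
  filter_ssubset.2 ⟨t, h.2.1, lt_irrefl t⟩

theorem IsSumCut.filter_le_ssubset (h : IsSumCut π s t) : s.filter (t ≤ ·) ⊂ s :=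
  let ⟨i, hi, hit⟩ := h.1
  filter_ssubset.2 ⟨i, hi, hit.not_ge⟩

theorem isSumCut_insert_of_forall_lt (ha : ∀ i ∈ s, i < a) (hs : s.Nonempty)
    (h : ∀ i ∈ s, π i < π a) : IsSumCut π (insert a s) a := by
  obtain ⟨b, hb⟩ := hs
  refine ⟨⟨b, mem_insert_of_mem hb, ha b hb⟩, mem_insert_self a s, fun i hi j hj hia haj => ?_⟩
  obtain rfl : j = a := (mem_insert.1 hj).resolve_right fun hj => (ha j hj).not_ge haj
  exact h i ((mem_insert.1 hi).resolve_left hia.ne)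

theorem IsSumCut.isDecomposableOn_insert (hπ : IsSeparablePerm π) (hinj : Injective π)
    (hcut : IsSumCut π s t) (ha : ∀ i ∈ s, i < a) (hlow : ∃ b ∈ s, π b < π a) :
    IsDecomposableOn π (insert a s) := by
  obtain ⟨⟨i₀, hi₀, hi₀t⟩, hts, hcut⟩ := hcut
  by_cases hbelow : ∀ i ∈ s, i < t → π i < π a
  · refine ⟨t, .inl ⟨⟨i₀, mem_insert_of_mem hi₀, hi₀t⟩, mem_insert_of_mem hts,
      fun i hi j hj hit htj => ?_⟩⟩
    have his : i ∈ s := (mem_insert.1 hi).resolve_left (hit.trans (ha t hts)).ne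
    rcases mem_insert.1 hj with rfl | hj
    exacts [hbelow i his hit, hcut i his j hj hit htj]
  push Not at hbelow
  obtain ⟨l, hl, hlt, hal⟩ := hbelow
  have hU : (s.filter (π a < π ·)).Nonempty :=
    ⟨l, mem_filter.2 ⟨hl, hal.lt_of_ne (hinj.ne (ha l hl).ne')⟩⟩
  set t' := (s.filter (π a < π ·)).min' hU
  obtain ⟨ht's, hat'⟩ := mem_filter.1 (min'_mem _ hU)
  -- otherwise `t', j, t, a` form the pattern `2413`
  have habove : ∀ j ∈ s, t' ≤ j → π a < π j := by
    intro j hj ht'j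
    by_contra! hja
    replace hja := hja.lt_of_ne (hinj.ne (ha j hj).ne)
    have hjt : j < t :=
      not_le.1 fun htj => (hcut l hl j hj hlt htj).not_ge (hja.le.trans hal)
    refine hπ ⟨t', j, t, a, ht'j.lt_of_ne ?_, hjt, ha t hts,
      .inl ⟨hja, hat', hcut t' ht's t hts (ht'j.trans_lt hjt) le_rfl⟩⟩
    rintro rfl
    exact hja.not_gt hat'
  obtain ⟨b, hb, hba⟩ := hlow
  refine ⟨t', .inl ⟨⟨b, mem_insert_of_mem hb, not_le.1 fun h => (habove b hb h).not_gt hba⟩,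
    mem_insert_of_mem ht's, fun i hi j hj hit' ht'j => ?_⟩⟩
  have his : i ∈ s := (mem_insert.1 hi).resolve_left (hit'.trans (ha t' ht's)).ne
  have hia : π i < π a := by
    refine (not_lt.1 fun h : π a < π i => ?_).lt_of_ne (hinj.ne (ha i his).ne)
    exact hit'.not_ge (min'_le _ i (mem_filter.2 ⟨his, h⟩))
  rcases mem_insert.1 hj with rfl | hj
  exacts [hia, hia.trans (habove j hj ht'j)]

theorem IsSeparablePerm.isDecomposableOn (hπ : IsSeparablePerm π) (hinj : Injective π)
    (hs : 1 < s.card) : IsDecomposableOn π s := by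
  induction s using Finset.induction_on_max with
  | empty => simp at hs
  | insert a s ha ih =>
    have hsne : s.Nonempty := by
      rw [card_insert_of_notMem fun h => (ha a h).false] at hs
      exact card_pos.1 (by omega)
    have hne : ∀ b ∈ s, π b ≠ π a := fun b hb => hinj.ne (ha b hb).ne
    by_cases hhigh : ∀ b ∈ s, π b < π a
    · exact ⟨a, .inl (isSumCut_insert_of_forall_lt ha hsne hhigh)⟩
    by_cases hlow : ∀ b ∈ s, π a < π b
    · exact ⟨a, .inr <| isSumCut_insert_of_forall_lt (π := OrderDual.toDual ∘ π) ha hsne hlow⟩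
    push Not at hhigh hlow
    obtain ⟨b₁, hb₁, h₁⟩ := hhigh
    obtain ⟨b₂, hb₂, h₂⟩ := hlow
    replace h₁ := h₁.lt_of_ne' (hne b₁ hb₁)
    replace h₂ := h₂.lt_of_ne (hne b₂ hb₂)
    obtain ⟨t, ht | ht⟩ :=
      ih (one_lt_card.2 ⟨b₁, hb₁, b₂, hb₂, fun h => by subst h; exact h₁.asymm h₂⟩)
    · exact ht.isDecomposableOn_insert hπ hinj ha ⟨b₂, hb₂, h₂⟩
    · exact (ht.isDecomposableOn_insert hπ.toDual (OrderDual.toDual.injective.comp hinj) ha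
        ⟨b₁, hb₁, h₁⟩).of_toDual

end Separable

section Construction

def EventuallyOrderedBy {ι α : Type*} [LT α] (l : Filter ℝ) (φ : ι → α) (s : Finset ι)
    (Q : ι → ℝ[X]) : Prop :=
  ∀ᶠ x in l, ∀ i ∈ s, ∀ j ∈ s, φ i < φ j → (Q i).eval x < (Q j).eval x

namespace EventuallyOrderedBy

variable {ι α : Type*} [Preorder α] {l : Filter ℝ} {φ : ι → α}

theorem of_card_le_one {s : Finset ι} (hs : s.card ≤ 1) (Q : ι → ℝ[X]) :
    EventuallyOrderedBy l φ s Q :=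
  .of_forall fun _ i hi j hj hij => absurd hij (card_le_one.1 hs i hi j hj ▸ lt_irrefl _)

theorem union [DecidableEq ι] (hl : l ≤ 𝓝[≠] 0) {L R : Finset ι} {A B Q : ι → ℝ[X]}
    {a b : ℝ[X]} (hA : EventuallyOrderedBy l φ L A) (hB : EventuallyOrderedBy l φ R B)
    (hLR : ∀ i ∈ L, ∀ j ∈ R, φ i < φ j)
    (hab : ∀ᶠ x in l, |x| ≤ b.eval x - a.eval x)
    (hQA : ∀ i ∈ L, Q i = X ^ 2 * A i + a) (hQB : ∀ i ∈ R, Q i = X ^ 2 * B i + b) :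
    EventuallyOrderedBy l φ (L ∪ R) Q := by
  have hcross : ∀ᶠ x in l, ∀ i ∈ L, ∀ j ∈ R, x ^ 2 * (A i - B j).eval x < |x| :=
    hl <| (eventually_all_finset L).2 fun i _ =>
      (eventually_all_finset R).2 fun j _ => eventually_sq_mul_eval_lt_abs (A i - B j)
  filter_upwards [hA, hB, hcross, hab, hl self_mem_nhdsWithin]
    with x hAx hBx hcrossx habx (hx : x ≠ 0)
  have hx2 : 0 < x ^ 2 := by positivity
  intro i hi j hj hij
  rcases mem_union.1 hi with hi | hi <;> rcases mem_union.1 hj with hj | hj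
  · simp only [hQA i hi, hQA j hj, eval_add, eval_mul, eval_pow, eval_X]
    gcongr
    exact hAx i hi j hj hij
  · have := hcrossx i hi j hj
    simp only [hQA i hi, hQB j hj, eval_add, eval_mul, eval_pow, eval_X, eval_sub] at this ⊢
    nlinarith
  · exact absurd hij (hLR j hj i hi).asymm
  · simp only [hQB i hi, hQB j hj, eval_add, eval_mul, eval_pow, eval_X]
    gcongr
    exact hBx i hi j hj hij

end EventuallyOrderedBy

variable {ι κ : Type*} [LinearOrder ι] [LinearOrder κ] {π : ι → κ}

theorem IsSeparablePerm.exists_eventuallyOrderedBy (hπ : IsSeparablePerm π)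
    (hinj : Injective π) (s : Finset ι) : ∃ Q : ι → ℝ[X],
      EventuallyOrderedBy (𝓝[<] 0) π s Q ∧ EventuallyOrderedBy (𝓝[>] 0) id s Q := by
  induction s using Finset.strongInduction with | H s ih =>
  rcases le_or_gt s.card 1 with hs | hs
  · exact ⟨0, .of_card_le_one hs 0, .of_card_le_one hs 0⟩
  obtain ⟨t, hcut⟩ := hπ.isDecomposableOn hinj hs
  obtain ⟨A, hAl, hAr⟩ := ih _ <| by
    rcases hcut with h | h
    exacts [h.filter_lt_ssubset, h.filter_lt_ssubset]
  obtain ⟨B, hBl, hBr⟩ := ih _ <| by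
    rcases hcut with h | h
    exacts [h.filter_le_ssubset, h.filter_le_ssubset]
  have hs : s.filter (· < t) ∪ s.filter (t ≤ ·) = s := by
    ext i
    simp [← and_or_left, lt_or_ge]
  have hpos : ∀ i ∈ s.filter (· < t), ∀ j ∈ s.filter (t ≤ ·), id i < id j :=
    fun i hi j hj => (mem_filter.1 hi).2.trans_le (mem_filter.1 hj).2
  have hlt : 𝓝[<] (0 : ℝ) ≤ 𝓝[≠] 0 := nhdsWithin_mono _ fun x hx => ne_of_lt hx
  have hgt : 𝓝[>] (0 : ℝ) ≤ 𝓝[≠] 0 := nhdsWithin_mono _ fun x hx => ne_of_gt hx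
  rcases hcut with ⟨-, -, hcut⟩ | ⟨-, -, hcut⟩
  · set Q : ι → ℝ[X] := fun i => if i < t then X ^ 2 * A i else X ^ 2 * B i + 1
    have hQA : ∀ i ∈ s.filter (· < t), Q i = X ^ 2 * A i + 0 := fun i hi => by
      simp [Q, (mem_filter.1 hi).2]
    have hQB : ∀ i ∈ s.filter (t ≤ ·), Q i = X ^ 2 * B i + 1 := fun i hi => by
      simp [Q, (mem_filter.1 hi).2]
    have hone : ∀ᶠ x in 𝓝 (0 : ℝ), |x| ≤ (1 : ℝ[X]).eval x - (0 : ℝ[X]).eval x := by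
      filter_upwards [Ioo_mem_nhds neg_one_lt_zero one_pos] with x hx
      simpa using abs_le.2 ⟨hx.1.le, hx.2.le⟩
    have hval : ∀ i ∈ s.filter (· < t), ∀ j ∈ s.filter (t ≤ ·), π i < π j :=
      fun i hi j hj => by
        rw [mem_filter] at hi hj
        exact hcut i hi.1 j hj.1 hi.2 hj.2
    exact ⟨Q, hs ▸ hAl.union hlt hBl hval (nhdsWithin_le_nhds hone) hQA hQB,
      hs ▸ hAr.union hgt hBr hpos (nhdsWithin_le_nhds hone) hQA hQB⟩
  · set Q : ι → ℝ[X] := fun i => if i < t then X ^ 2 * A i else X ^ 2 * B i + X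
    have hQA : ∀ i ∈ s.filter (· < t), Q i = X ^ 2 * A i + 0 := fun i hi => by
      simp [Q, (mem_filter.1 hi).2]
    have hQB : ∀ i ∈ s.filter (t ≤ ·), Q i = X ^ 2 * B i + X := fun i hi => by
      simp [Q, (mem_filter.1 hi).2]
    have hval : ∀ i ∈ s.filter (t ≤ ·), ∀ j ∈ s.filter (· < t), π i < π j :=
      fun i hi j hj => by
        rw [mem_filter] at hi hj
        exact hcut j hj.1 i hi.1 hj.2 hi.2
    have hleft : ∀ᶠ x in 𝓝[<] 0, |x| ≤ (0 : ℝ[X]).eval x - X.eval x := by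
      filter_upwards [self_mem_nhdsWithin] with x (hx : x < 0)
      simp [abs_of_neg hx]
    have hright : ∀ᶠ x in 𝓝[>] 0, |x| ≤ X.eval x - (0 : ℝ[X]).eval x := by
      filter_upwards [self_mem_nhdsWithin] with x (hx : 0 < x)
      simp [abs_of_pos hx]
    refine ⟨Q, ?_, hs ▸ hAr.union hgt hBr hpos hright hQA hQB⟩
    rw [← hs, union_comm]
    exact hBl.union hlt hAl hval hleft hQB hQA

end Construction

theorem exists_pos_of_eventually_nhdsLT_of_eventually_nhdsGT {p q : ℝ → Prop}
    (hp : ∀ᶠ x in 𝓝[<] 0, p x) (hq : ∀ᶠ x in 𝓝[>] 0, q x) :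
    ∃ ε, 0 < ε ∧ (∀ x, -ε < x → x < 0 → p x) ∧ ∀ x, 0 < x → x < ε → q x := by
  obtain ⟨a, ha, hap⟩ := (nhdsLT_basis 0).eventually_iff.1 hp
  obtain ⟨b, hb, hbq⟩ := (nhdsGT_basis 0).eventually_iff.1 hq
  refine ⟨min (-a) b, lt_min (neg_pos.2 ha) hb, fun x h₁ h₂ => hap ⟨?_, h₂⟩,
    fun x h₁ h₂ => hbq ⟨h₁, h₂.trans_le (min_le_right _ _)⟩⟩
  linarith [min_le_left (-a) b]

theorem polynomial_interchange_iff_separable_general (n : ℕ)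
    (π : Equiv.Perm (Fin n)) :
    (∃ (P : Fin n → Polynomial ℝ) (ε : ℝ), 0 < ε ∧
        (∀ x : ℝ, -ε < x → x < 0 →
          ∀ i j : Fin n, i < j → (P i).eval x < (P j).eval x) ∧
        (∀ x : ℝ, 0 < x → x < ε →
          ∀ i j : Fin n, i < j → (P (π i)).eval x < (P (π j)).eval x)) ↔
      ¬ ∃ i₁ i₂ i₃ i₄ : Fin n, i₁ < i₂ ∧ i₂ < i₃ ∧ i₃ < i₄ ∧
          ((π i₂ < π i₄ ∧ π i₄ < π i₁ ∧ π i₁ < π i₃) ∨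
           (π i₃ < π i₁ ∧ π i₁ < π i₄ ∧ π i₄ < π i₂)) := by
  constructor
  · rintro ⟨P, ε, hε, hl, hr⟩
    refine isSeparablePerm_of_eventually_lt (P ∘ π) (fun i j h => ?_) fun i j h => ?_
    · filter_upwards [Ioo_mem_nhdsLT (neg_lt_zero.2 hε)] with x hx
        using hl x hx.1 hx.2 _ _ h
    · filter_upwards [Ioo_mem_nhdsGT hε] with x hx using hr x hx.1 hx.2 _ _ h
  · intro hπ
    obtain ⟨Q, hl, hr⟩ := IsSeparablePerm.exists_eventuallyOrderedBy hπ π.injective univ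
    obtain ⟨ε, hε, hεl, hεr⟩ := exists_pos_of_eventually_nhdsLT_of_eventually_nhdsGT hl hr
    refine ⟨Q ∘ π.symm, ε, hε, fun x h₁ h₂ i j hij => ?_, fun x h₁ h₂ i j hij => ?_⟩
    · simpa using hεl x h₁ h₂ (π.symm i) (mem_univ _) (π.symm j) (mem_univ _) (by simpa)
    · simpa using hεr x h₁ h₂ i (mem_univ _) j (mem_univ _) hij

/-- A permutation of `{1, …, n}` is a polynomial interchange if and only if it is
separable, i.e. it does not contain the patterns `(2,4,1,3)` or `(3,1,4,2)`. -/
theorem polynomial_interchange_iff_separable (n : ℕ) (hn : 1 ≤ n)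
    (π : Equiv.Perm (Fin n)) :
    (∃ (P : Fin n → Polynomial ℝ) (ε : ℝ), 0 < ε ∧
        (∀ x : ℝ, -ε < x → x < 0 →
          ∀ i j : Fin n, i < j → (P i).eval x < (P j).eval x) ∧
        (∀ x : ℝ, 0 < x → x < ε →
          ∀ i j : Fin n, i < j → (P (π i)).eval x < (P (π j)).eval x)) ↔
      ¬ ∃ i₁ i₂ i₃ i₄ : Fin n, i₁ < i₂ ∧ i₂ < i₃ ∧ i₃ < i₄ ∧
          ((π i₂ < π i₄ ∧ π i₄ < π i₁ ∧ π i₁ < π i₃) ∨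
           (π i₃ < π i₁ ∧ π i₁ < π i₄ ∧ π i₄ < π i₂)) :=
  polynomial_interchange_iff_separable_general n π
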